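/- The Nagamochi–Ibaraki forest decomposition yields a k-connectivity certificate: let F_1, …, F_k be edge-disjoint forests constructed greedily by inserting each arriving edge e into F_i for the smallest i such that F_i ∪ {e} is acyclic (discarding e if no such i ≤ k exists). Then for every cut (S, V∖S) of the input graph G of size at most k, every edge of G crossing (S, V∖S) belongs to F_1 ∪ ⋯ ∪ F_k, and |F_1 ∪ ⋯ ∪ F_k| ≤ k(n−1). -/

import Mathlib

/-!
If an edge `s(x, y)` crossing a cut is discarded, it closes a cycle in each of the `k` forests,
so `x` and `y` are connected in every forest and each forest contains an edge of the cut. The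
forests are edge-disjoint (an edge of a later forest closes a cycle in every earlier one), so these
`k` edges are distinct, and together with `s(x, y)` the cut has more than `k` edges. The size bound
holds because a forest on `n` vertices has at most `n - 1` edges.
-/

open Finset

/-- The edges of the edge set F crossing the cut (S, V∖S). -/
def cutEdges {V : Type*} [Fintype V] [DecidableEq V]
    (F : Finset (Sym2 V)) (S : Finset V) : Finset (Sym2 V) :=
  F.filter (fun e => ∃ x y : V, e = s(x, y) ∧ x ∈ S ∧ y ∉ S)

open Classical in
/-- One step of the Nagamochi–Ibaraki greedy: insert the arriving edge e into the
first of the k forests F_0,…,F_{k−1} in which it does not close a cycle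
(discard it if none exists). -/
noncomputable def NIstep {V : Type*} [Fintype V] [DecidableEq V] (k : ℕ)
    (F : ℕ → Finset (Sym2 V)) (e : Sym2 V) : ℕ → Finset (Sym2 V) :=
  if h : ∃ i, i < k ∧
      (SimpleGraph.fromEdgeSet ((insert e (F i) : Finset (Sym2 V)) : Set (Sym2 V))).IsAcyclic
  then fun j => if j = Nat.find h then insert e (F j) else F j
  else F

/-- The k forests produced by processing the stream l of edges greedily,
starting from empty forests. -/
noncomputable def NIforests {V : Type*} [Fintype V] [DecidableEq V] (k : ℕ)
    (l : List (Sym2 V)) : ℕ → Finset (Sym2 V) :=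
  l.foldl (NIstep k) (fun _ => ∅)

open SimpleGraph

section Forests

variable {V : Type*}

/-- Loops `s(v, v)` in `F` are ignored, since `fromEdgeSet` discards them. -/
abbrev IsForest (F : Finset (Sym2 V)) : Prop := (fromEdgeSet (F : Set (Sym2 V))).IsAcyclic

lemma IsForest.anti {F G : Finset (Sym2 V)} (hFG : F ⊆ G) (hG : IsForest G) : IsForest F :=
  SimpleGraph.IsAcyclic.anti (fromEdgeSet_mono (by exact_mod_cast hFG)) hG

lemma IsForest.reachable_of_not_isForest_insert [DecidableEq V] {F : Finset (Sym2 V)}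
    (hF : IsForest F) {x y : V} (h : ¬ IsForest (insert s(x, y) F)) :
    (fromEdgeSet (F : Set (Sym2 V))).Reachable x y := by
  by_contra hxy
  refine h ?_
  have : fromEdgeSet ((insert s(x, y) F : Finset (Sym2 V)) : Set (Sym2 V)) =
      fromEdgeSet (F : Set (Sym2 V)) ⊔ edge x y := by
    rw [coe_insert, Set.insert_eq, fromEdgeSet_union, sup_comm, edge]
  rw [IsForest, this]
  exact hF.sup_edge_of_not_reachable hxy

lemma SimpleGraph.IsAcyclic.card_edgeFinset_le [Fintype V] {G : SimpleGraph V} [Fintype G.edgeSet]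
    (hG : G.IsAcyclic) : #G.edgeFinset ≤ Fintype.card V - 1 := by
  cases isEmpty_or_nonempty V
  · simp [Subsingleton.elim G ⊥]
  obtain ⟨T, hGT, -, hT⟩ := connected_top.exists_isTree_le_of_le_of_isAcyclic le_top hG
  classical
  have := hT.card_edgeFinset
  have := card_le_card (edgeFinset_mono hGT)
  omega

lemma IsForest.card_le [Fintype V] {F : Finset (Sym2 V)} (hF : IsForest F)
    (hloop : ∀ e ∈ F, ¬ e.IsDiag) : #F ≤ Fintype.card V - 1 := by
  classical
  convert IsAcyclic.card_edgeFinset_le hF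
  ext e
  simp only [mem_edgeFinset, edgeSet_fromEdgeSet, Set.mem_sdiff, mem_coe, Sym2.mem_diagSet]
  exact ⟨fun he => ⟨he, hloop e he⟩, And.left⟩

end Forests

section Cuts

variable {V : Type*} [Fintype V] [DecidableEq V]

lemma cutEdges_mono {E F : Finset (Sym2 V)} (h : F ⊆ E) (S : Finset V) :
    cutEdges F S ⊆ cutEdges E S :=
  filter_subset_filter _ h

lemma cutEdges_nonempty_of_reachable {F : Finset (Sym2 V)} {S : Finset V} {x y : V}
    (hx : x ∈ S) (hy : y ∉ S) (h : (fromEdgeSet (F : Set (Sym2 V))).Reachable x y) :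
    (cutEdges F S).Nonempty := by
  obtain ⟨p⟩ := h
  obtain ⟨d, -, hd, hd'⟩ := p.exists_boundary_dart S hx hy
  exact ⟨s(d.fst, d.snd), mem_filter.2 ⟨((fromEdgeSet_adj _).1 d.adj).1, _, _, rfl, hd, hd'⟩⟩

lemma lt_card_cutEdges {E : Finset (Sym2 V)} {F : ℕ → Finset (Sym2 V)} {S : Finset V} {k : ℕ}
    {e : Sym2 V} (hdisj : Pairwise (Function.onFun Disjoint F)) (hFE : ∀ i, F i ⊆ E)
    (he : e ∈ cutEdges E S) (he' : e ∉ (range k).biUnion F)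
    (hcross : ∀ i < k, (cutEdges (F i) S).Nonempty) : k < #(cutEdges E S) := by
  set C := (range k).biUnion fun i => cutEdges (F i) S
  have hdisjC : (range k : Set ℕ).PairwiseDisjoint fun i => cutEdges (F i) S :=
    fun i _ j _ hij => (hdisj hij).mono (filter_subset _ _) (filter_subset _ _)
  have heC : e ∉ C := fun h => he' (biUnion_mono (fun i _ => filter_subset _ _) h)
  have hCE : insert e C ⊆ cutEdges E S :=
    insert_subset he (biUnion_subset.2 fun i _ => cutEdges_mono (hFE i) S)
  calc k = ∑ _i ∈ range k, 1 := by simp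
    _ ≤ ∑ i ∈ range k, #(cutEdges (F i) S) :=
        sum_le_sum fun i hi => (hcross i (mem_range.1 hi)).card_pos
    _ = #C := (card_biUnion hdisjC).symm
    _ < #(insert e C) := by rw [card_insert_of_notMem heC]; omega
    _ ≤ #(cutEdges E S) := card_le_card hCE

end Cuts

section Greedy

variable {V : Type*} [DecidableEq V]

structure IsGreedyForests (F : ℕ → Finset (Sym2 V)) : Prop where
  isForest : ∀ i, IsForest (F i)
  not_isForest_insert : ∀ ⦃i j⦄, i < j → ∀ e ∈ F j, ¬ IsForest (insert e (F i))

lemma isGreedyForests_empty : IsGreedyForests (fun _ => (∅ : Finset (Sym2 V))) :=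
  ⟨fun _ => by simp [IsForest], fun _ _ _ _ he => absurd he (notMem_empty _)⟩

lemma IsGreedyForests.pairwise_disjoint {F : ℕ → Finset (Sym2 V)} (hF : IsGreedyForests F) :
    Pairwise (Function.onFun Disjoint F) := by
  suffices ∀ ⦃i j⦄, i < j → Disjoint (F i) (F j) from
    fun i j hij => hij.lt_or_gt.elim (fun h => this h) fun h => (this h).symm
  refine fun i j hij => disjoint_left.2 fun e hi hj => ?_
  exact hF.not_isForest_insert hij e hj (by rw [insert_eq_self.2 hi]; exact hF.isForest i)

lemma IsGreedyForests.update_insert {F : ℕ → Finset (Sym2 V)}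
    (hF : IsGreedyForests F) {j : ℕ} {e : Sym2 V} (hj : IsForest (insert e (F j)))
    (hmin : ∀ i < j, ¬ IsForest (insert e (F i))) :
    IsGreedyForests (Function.update F j (insert e (F j))) := by
  have hsub : ∀ i, F i ⊆ Function.update F j (insert e (F j)) i := fun i => by
    rcases eq_or_ne i j with rfl | hij
    · simp [subset_insert]
    · simp [hij]
  refine ⟨fun i => ?_, fun i i' hii' f hf hfor => ?_⟩
  · rcases eq_or_ne i j with rfl | hij
    · simpa using hj
    · simpa [hij] using hF.isForest i
  replace hfor := hfor.anti (insert_subset_insert f (hsub i))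
  rcases eq_or_ne i' j with rfl | hi'j
  · rcases mem_insert.1 (by simpa using hf) with rfl | hf
    · exact hmin i hii' hfor
    · exact hF.not_isForest_insert hii' f hf hfor
  · exact hF.not_isForest_insert hii' f (by simpa [hi'j] using hf) hfor

variable [Fintype V]

open Classical in
lemma NIstep_cases (k : ℕ) (F : ℕ → Finset (Sym2 V)) (e : Sym2 V) :
    (∃ j < k, IsForest (insert e (F j)) ∧ (∀ i < j, ¬ IsForest (insert e (F i))) ∧
      NIstep k F e = Function.update F j (insert e (F j))) ∨
    ((∀ i < k, ¬ IsForest (insert e (F i))) ∧ NIstep k F e = F) := by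
  unfold NIstep
  split_ifs with h
  · refine .inl ⟨Nat.find h, (Nat.find_spec h).1, (Nat.find_spec h).2,
      fun i hi hfor => Nat.find_min h hi ⟨hi.trans (Nat.find_spec h).1, hfor⟩, ?_⟩
    funext i
    by_cases hi : i = Nat.find h
    · subst hi; simp
    · rw [if_neg hi, Function.update_of_ne hi]
  · push Not at h
    exact .inr ⟨h, rfl⟩

lemma subset_NIstep (k : ℕ) (F : ℕ → Finset (Sym2 V)) (e : Sym2 V) (i : ℕ) :
    F i ⊆ NIstep k F e i := by
  rcases NIstep_cases k F e with ⟨j, -, -, -, h⟩ | ⟨-, h⟩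
  · rcases eq_or_ne i j with rfl | hij
    · simp [h, subset_insert]
    · simp [h, hij]
  · rw [h]

lemma NIstep_subset_insert (k : ℕ) (F : ℕ → Finset (Sym2 V)) (e : Sym2 V) (i : ℕ) :
    NIstep k F e i ⊆ insert e (F i) := by
  rcases NIstep_cases k F e with ⟨j, -, -, -, h⟩ | ⟨-, h⟩
  · rcases eq_or_ne i j with rfl | hij
    · simp [h]
    · simp [h, hij, subset_insert]
  · simp [h, subset_insert]

lemma isGreedyForests_NIstep {F : ℕ → Finset (Sym2 V)} (hF : IsGreedyForests F) (k : ℕ)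
    (e : Sym2 V) : IsGreedyForests (NIstep k F e) := by
  rcases NIstep_cases k F e with ⟨j, -, hj, hmin, h⟩ | ⟨-, h⟩
  · rw [h]; exact hF.update_insert hj hmin
  · rw [h]; exact hF

lemma mem_NIstep_or_not_isForest_insert (k : ℕ) (F : ℕ → Finset (Sym2 V)) (e : Sym2 V) :
    (∃ j < k, e ∈ NIstep k F e j) ∨ ∀ i < k, ¬ IsForest (insert e (F i)) := by
  rcases NIstep_cases k F e with ⟨j, hjk, -, -, h⟩ | ⟨h, -⟩
  · exact .inl ⟨j, hjk, by simp [h]⟩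
  · exact .inr h

lemma subset_foldl_NIstep (k : ℕ) (l : List (Sym2 V)) (F : ℕ → Finset (Sym2 V)) (i : ℕ) :
    F i ⊆ l.foldl (NIstep k) F i := by
  induction l generalizing F with
  | nil => exact Subset.rfl
  | cons a l ih => exact (subset_NIstep k F a i).trans (ih _)

lemma foldl_NIstep_subset (k : ℕ) (l : List (Sym2 V)) (F : ℕ → Finset (Sym2 V)) (i : ℕ) :
    l.foldl (NIstep k) F i ⊆ F i ∪ l.toFinset := by
  induction l generalizing F with
  | nil => simp
  | cons a l ih =>
    refine (ih _).trans ?_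
    have := NIstep_subset_insert k F a i
    intro e
    simp only [mem_union, List.mem_toFinset, List.mem_cons]
    grind

lemma isGreedyForests_foldl_NIstep {F : ℕ → Finset (Sym2 V)} (hF : IsGreedyForests F) (k : ℕ)
    (l : List (Sym2 V)) : IsGreedyForests (l.foldl (NIstep k) F) := by
  induction l generalizing F with
  | nil => exact hF
  | cons a l ih => exact ih (isGreedyForests_NIstep hF k a)

lemma mem_foldl_NIstep_or_not_isForest_insert (k : ℕ) {l : List (Sym2 V)} {e : Sym2 V}
    (he : e ∈ l) (F : ℕ → Finset (Sym2 V)) :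
    (∃ j < k, e ∈ l.foldl (NIstep k) F j) ∨
      ∀ i < k, ¬ IsForest (insert e (l.foldl (NIstep k) F i)) := by
  induction l generalizing F with
  | nil => simp at he
  | cons a l ih =>
    rcases List.mem_cons.1 he with rfl | he
    · rcases mem_NIstep_or_not_isForest_insert k F e with ⟨j, hjk, hj⟩ | h
      · exact .inl ⟨j, hjk, subset_foldl_NIstep k l _ j hj⟩
      · refine .inr fun i hi hfor => h i hi (hfor.anti (insert_subset_insert e ?_))
        exact (subset_NIstep k F e i).trans (subset_foldl_NIstep k l _ i)
    · exact ih he _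

lemma mem_NIforests_or_not_isForest_insert (k : ℕ) {l : List (Sym2 V)} {e : Sym2 V}
    (he : e ∈ l) :
    (∃ j < k, e ∈ NIforests k l j) ∨ ∀ i < k, ¬ IsForest (insert e (NIforests k l i)) :=
  mem_foldl_NIstep_or_not_isForest_insert k he _

lemma isGreedyForests_NIforests (k : ℕ) (l : List (Sym2 V)) :
    IsGreedyForests (NIforests k l) :=
  isGreedyForests_foldl_NIstep isGreedyForests_empty k l

lemma NIforests_subset (k : ℕ) (l : List (Sym2 V)) (i : ℕ) : NIforests k l i ⊆ l.toFinset := by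
  unfold NIforests
  simpa using foldl_NIstep_subset k l (fun _ => ∅) i

end Greedy

/-- The Nagamochi–Ibaraki forest decomposition is a k-connectivity
certificate: for every cut of the streamed graph of size at most k, all crossing
edges are retained in F_1 ∪ ⋯ ∪ F_k, and the total number of retained edges is at
most k(n−1). -/
theorem stmt12 {V : Type*} [Fintype V] [DecidableEq V] (k : ℕ)
    (l : List (Sym2 V)) (hl : ∀ e ∈ l, ¬ e.IsDiag) :
    (∀ S : Finset V, S.Nonempty → S ≠ Finset.univ →
      (cutEdges l.toFinset S).card ≤ k →
      cutEdges l.toFinset S ⊆ (Finset.range k).biUnion (NIforests k l)) ∧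
    ((Finset.range k).biUnion (NIforests k l)).card ≤ k * (Fintype.card V - 1) := by
  have hF := isGreedyForests_NIforests k l
  refine ⟨fun S _ _ hcard e he => ?_, ?_⟩
  · obtain ⟨hel, x, y, rfl, hx, hy⟩ := mem_filter.1 he
    rcases mem_NIforests_or_not_isForest_insert k (List.mem_toFinset.1 hel)
      with ⟨j, hjk, hj⟩ | hcycle
    · exact mem_biUnion.2 ⟨j, mem_range.2 hjk, hj⟩
    by_contra he'
    refine (lt_card_cutEdges hF.pairwise_disjoint (NIforests_subset k l) he he'
      fun i hi => cutEdges_nonempty_of_reachable hx hy ?_).not_ge hcard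
    exact (hF.isForest i).reachable_of_not_isForest_insert (hcycle i hi)
  · calc #((range k).biUnion (NIforests k l))
        ≤ ∑ i ∈ range k, #(NIforests k l i) := card_biUnion_le
      _ ≤ ∑ _i ∈ range k, (Fintype.card V - 1) := sum_le_sum fun i _ =>
          (hF.isForest i).card_le fun e he => hl e (List.mem_toFinset.1 (NIforests_subset k l i he))
      _ = k * (Fintype.card V - 1) := by simp
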